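/- arXiv:patt-sol/9801003 — 3 statements merged into one kernel-verified Lean document; each statement's English description precedes it below -/
import Mathlib

section
/- Uniqueness of the mixing profile: for fixed η₊, η₋ ∈ (−1/√3, 1/√3), if η̃₁ and η̃₂ are two twice continuously differentiable functions ℝ → (−1/√3, 1/√3) both satisfying (d²/dξ²)[A(η̃ⱼ(ξ))] + (ξ/2)·η̃ⱼ′(ξ) = 0 for all ξ ∈ ℝ together with the boundary conditions η̃ⱼ(ξ) → η₊ as ξ → +∞ and η̃ⱼ(ξ) → η₋ as ξ → −∞ (j = 1, 2), then η̃₁ = η̃₂. -/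
noncomputable section

open Real Filter MeasureTheory Set

/-- The coefficient `a(η) = (1 - 3η²)/(1 - η²)`. -/
def aGL (η : ℝ) : ℝ := (1 - 3 * η ^ 2) / (1 - η ^ 2)

/-- The primitive `A(η) = ∫₀^η a(s) ds`. -/
def AGL (η : ℝ) : ℝ := ∫ s in (0:ℝ)..η, aGL s

/-- A mixing profile for boundary values `ηp` (at `+∞`) and `ηm` (at `-∞`). -/
def IsMixingProfile (ηp ηm : ℝ) (e : ℝ → ℝ) : Prop :=
  ContDiff ℝ 2 e ∧
  (∀ ξ, e ξ ∈ Set.Ioo (-(1 / Real.sqrt 3)) (1 / Real.sqrt 3)) ∧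
  (∀ ξ, deriv (deriv (fun x => AGL (e x))) ξ + ξ / 2 * deriv e ξ = 0) ∧
  Filter.Tendsto e Filter.atTop (nhds ηp) ∧
  Filter.Tendsto e Filter.atBot (nhds ηm)

/-!
The flux `v = a(η) η'` is the derivative of `A ∘ η`, and the equation reads
`v' = -ξ v / (2 a(η))` with `0 < a(η) ≤ 1` on `(-1/√3, 1/√3)`. Hence `v = v(0) exp (-I)` with
`I(ξ) ≥ ξ²/4`: the flux has constant sign and Gaussian decay, so a profile is constant when
`η₋ = η₊` and strictly monotone from `η₋` to `η₊` otherwise. Up to the symmetry `η ↦ -η` both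
profiles increase, and we may write `η̃₁ = η̃₂ ∘ φ`. Then `G = v₁ - v₂ ∘ φ` and `ψ = φ - id`
satisfy `G' = (η̃₁'/2) ψ`, `ψ' = G / (v₂ ∘ φ)` and `G → 0` at `±∞`. At a positive maximum of `G`
we would have `ψ = 0 < ψ'`, which pushes `G` further up; so `G ≤ 0`, symmetrically `G ≥ 0`,
and then `ψ = 0`.
-/

open Function Topology

lemma integral_id_mul_nonneg {c : ℝ → ℝ} (hc : ∀ s, 0 ≤ c s) (ξ : ℝ) :
    0 ≤ ∫ s in (0:ℝ)..ξ, s * c s := by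
  rcases le_total 0 ξ with hξ | hξ
  · exact intervalIntegral.integral_nonneg hξ fun s hs => mul_nonneg hs.1 (hc s)
  · rw [intervalIntegral.integral_symm, ← intervalIntegral.integral_neg]
    exact intervalIntegral.integral_nonneg hξ fun s hs =>
      neg_nonneg.2 (mul_nonpos_of_nonpos_of_nonneg hs.2 (hc s))

lemma tendsto_atTop_of_monotone_comp {α β γ : Type*} [LinearOrder α] [LinearOrder β]
    [TopologicalSpace β] [OrderTopology β] {f : α → β} {φ : γ → α} {l : Filter γ} {b : β}
    (hf : Monotone f) (hlt : ∀ x, f x < b) (h : Tendsto (f ∘ φ) l (𝓝 b)) :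
    Tendsto φ l atTop :=
  tendsto_atTop.2 fun M =>
    (h.eventually (lt_mem_nhds (hlt M))).mono fun _ hx => (hf.reflect_lt hx).le

lemma tendsto_atBot_of_monotone_comp {α β γ : Type*} [LinearOrder α] [LinearOrder β]
    [TopologicalSpace β] [OrderTopology β] {f : α → β} {φ : γ → α} {l : Filter γ} {b : β}
    (hf : Monotone f) (hlt : ∀ x, b < f x) (h : Tendsto (f ∘ φ) l (𝓝 b)) :
    Tendsto φ l atBot :=
  tendsto_atTop_of_monotone_comp (α := αᵒᵈ) (β := βᵒᵈ) hf.dual hlt h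

lemma hasDerivAt_invFun {𝕜 : Type*} [NontriviallyNormedField 𝕜] [CompleteSpace 𝕜] {f : 𝕜 → 𝕜}
    {f' a : 𝕜} (hf : Injective f) (hfa : HasStrictDerivAt f f' a) (hf' : f' ≠ 0) :
    HasDerivAt (invFun f) f'⁻¹ (f a) :=
  (hfa.to_local_left_inverse hf' (Eventually.of_forall (leftInverse_invFun hf))).hasDerivAt

lemma strictMonoOn_Icc_of_hasDerivAt_pos {f f' : ℝ → ℝ} {a b : ℝ}
    (hf : ∀ x, HasDerivAt f (f' x) x) (hf' : ∀ x ∈ Ioo a b, 0 < f' x) :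
    StrictMonoOn f (Icc a b) :=
  strictMonoOn_of_hasDerivWithinAt_pos (convex_Icc a b)
    (fun x _ => (hf x).continuousAt.continuousWithinAt) (fun x _ => (hf x).hasDerivWithinAt)
    (by simpa only [interior_Icc] using hf')

lemma nonpos_of_cooperative {G ψ p q : ℝ → ℝ} (hp : ∀ x, 0 < p x) (hq : ∀ x, 0 < q x)
    (hG : ∀ x, HasDerivAt G (p x * ψ x) x) (hψ : ∀ x, HasDerivAt ψ (q x * G x) x)
    (hlim : Tendsto G (cocompact ℝ) (𝓝 0)) (x : ℝ) : G x ≤ 0 := by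
  by_contra! hx
  have hGc : Continuous G := continuous_iff_continuousAt.2 fun y => (hG y).continuousAt
  obtain ⟨ξ₀, hmax⟩ := hGc.exists_forall_ge' x (hlim.eventually (ge_mem_nhds hx))
  have hpos : 0 < G ξ₀ := hx.trans_le (hmax x)
  have hψ₀ : ψ ξ₀ = 0 := by
    have := IsLocalMax.hasDerivAt_eq_zero (Eventually.of_forall hmax) (hG ξ₀)
    exact (mul_eq_zero.1 this).resolve_left (hp ξ₀).ne'
  obtain ⟨b, hb : ξ₀ < b, hGpos⟩ : ∃ b ∈ Ioi ξ₀, Icc ξ₀ b ⊆ {y | 0 < G y} :=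
    mem_nhdsGE_iff_exists_Icc_subset.1
      (nhdsWithin_le_nhds (hGc.continuousAt.eventually (lt_mem_nhds hpos)))
  have hψmono := strictMonoOn_Icc_of_hasDerivAt_pos hψ fun y hy =>
    mul_pos (hq y) (hGpos (Ioo_subset_Icc_self hy))
  have hGmono := strictMonoOn_Icc_of_hasDerivAt_pos hG fun y hy =>
    mul_pos (hp y) (hψ₀ ▸ hψmono (left_mem_Icc.2 hb.le) (Ioo_subset_Icc_self hy) hy.1)
  exact (hGmono (left_mem_Icc.2 hb.le) (right_mem_Icc.2 hb.le) hb).not_ge (hmax b)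

lemma eq_zero_of_cooperative {G ψ p q : ℝ → ℝ} (hp : ∀ x, 0 < p x) (hq : ∀ x, 0 < q x)
    (hG : ∀ x, HasDerivAt G (p x * ψ x) x) (hψ : ∀ x, HasDerivAt ψ (q x * G x) x)
    (hlim : Tendsto G (cocompact ℝ) (𝓝 0)) : G = 0 ∧ ψ = 0 := by
  have hG0 : G = 0 := funext fun x => le_antisymm (nonpos_of_cooperative hp hq hG hψ hlim x) <|
    neg_nonpos.1 <| nonpos_of_cooperative (G := -G) (ψ := -ψ) hp hq
      (fun y => by simpa using (hG y).neg) (fun y => by simpa using (hψ y).neg)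
      (neg_zero (G := ℝ) ▸ hlim.neg) x
  refine ⟨hG0, funext fun x => ?_⟩
  have := (hG x).unique (by rw [hG0]; exact hasDerivAt_const x 0)
  show ψ x = 0
  exact (mul_eq_zero.1 this).resolve_left (hp x).ne'

lemma sq_lt_one_third_of_mem_Ioo {x : ℝ} (hx : x ∈ Ioo (-(1 / √3)) (1 / √3)) :
    x ^ 2 < 1 / 3 := by
  have h := sq_lt_sq' hx.1 hx.2
  rwa [div_pow, one_pow, sq_sqrt (by norm_num)] at h

lemma aGL_pos {x : ℝ} (hx : x ^ 2 < 1 / 3) : 0 < aGL x :=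
  div_pos (by linarith) (by linarith)

lemma aGL_le_one {x : ℝ} (hx : x ^ 2 < 1) : aGL x ≤ 1 := by
  rw [aGL, div_le_one (by linarith)]
  nlinarith

lemma aGL_neg (x : ℝ) : aGL (-x) = aGL x := by
  simp [aGL]

lemma differentiableAt_aGL {x : ℝ} (hx : x ^ 2 < 1) : DifferentiableAt ℝ aGL x :=
  (by fun_prop : DifferentiableAt ℝ (fun y : ℝ => 1 - 3 * y ^ 2) x).div (by fun_prop)
    (by linarith)

lemma continuousOn_aGL : ContinuousOn aGL {x : ℝ | x ^ 2 < 1} :=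
  fun _ hx => (differentiableAt_aGL hx).continuousAt.continuousWithinAt

lemma hasDerivAt_AGL {x : ℝ} (hx : x ^ 2 < 1) : HasDerivAt AGL (aGL x) x := by
  have hopen : IsOpen {x : ℝ | x ^ 2 < 1} := isOpen_lt (by fun_prop) continuous_const
  have hsub : uIcc 0 x ⊆ {x : ℝ | x ^ 2 < 1} := fun s hs => by
    show s ^ 2 < 1
    rcases mem_uIcc.1 hs with ⟨h0, hx'⟩ | ⟨hx', h0⟩ <;> nlinarith
  exact intervalIntegral.integral_hasDerivAt_right
    ((continuousOn_aGL.mono hsub).intervalIntegrable)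
    (continuousOn_aGL.stronglyMeasurableAtFilter hopen x hx)
    (differentiableAt_aGL hx).continuousAt

lemma AGL_neg (x : ℝ) : AGL (-x) = -AGL x := by
  have h : ∫ s in (0:ℝ)..x, aGL (-s) = ∫ s in -x..0, aGL s := by
    rw [intervalIntegral.integral_comp_neg, neg_zero]
  simp only [aGL_neg] at h
  rw [AGL, AGL, intervalIntegral.integral_symm, ← h]

def flux (e : ℝ → ℝ) (ξ : ℝ) : ℝ := aGL (e ξ) * deriv e ξ

def fluxExponent (e : ℝ → ℝ) (ξ : ℝ) : ℝ := ∫ s in (0:ℝ)..ξ, s / (2 * aGL (e s))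

lemma flux_neg (e : ℝ → ℝ) : flux (-e) = -flux e := by
  ext ξ
  simp [flux, deriv.neg', aGL_neg]

namespace IsMixingProfile

variable {ηp ηm : ℝ} {e : ℝ → ℝ}

lemma sq_lt_one_third (h : IsMixingProfile ηp ηm e) (ξ : ℝ) : e ξ ^ 2 < 1 / 3 :=
  sq_lt_one_third_of_mem_Ioo (h.2.1 ξ)

lemma sq_lt_one (h : IsMixingProfile ηp ηm e) (ξ : ℝ) : e ξ ^ 2 < 1 := by
  linarith [h.sq_lt_one_third ξ]

lemma aGL_pos (h : IsMixingProfile ηp ηm e) (ξ : ℝ) : 0 < aGL (e ξ) :=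
  _root_.aGL_pos (h.sq_lt_one_third ξ)

lemma differentiable (h : IsMixingProfile ηp ηm e) : Differentiable ℝ e :=
  h.1.differentiable (by norm_num)

lemma differentiable_deriv (h : IsMixingProfile ηp ηm e) : Differentiable ℝ (deriv e) :=
  (contDiff_succ_iff_deriv.1 h.1).2.2.differentiable one_ne_zero

lemma hasDerivAt_AGL_comp (h : IsMixingProfile ηp ηm e) (ξ : ℝ) :
    HasDerivAt (fun x => AGL (e x)) (flux e ξ) ξ :=
  (hasDerivAt_AGL (h.sq_lt_one ξ)).comp ξ (h.differentiable ξ).hasDerivAt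

lemma hasDerivAt_flux (h : IsMixingProfile ηp ηm e) (ξ : ℝ) :
    HasDerivAt (flux e) (-(ξ / 2) * deriv e ξ) ξ := by
  have hdiff : DifferentiableAt ℝ (flux e) ξ :=
    ((differentiableAt_aGL (h.sq_lt_one ξ)).comp ξ (h.differentiable ξ)).mul
      (h.differentiable_deriv ξ)
  have hode := h.2.2.1 ξ
  rw [funext fun x => (h.hasDerivAt_AGL_comp x).deriv] at hode
  exact hdiff.hasDerivAt.congr_deriv (by linarith)

lemma deriv_eq_flux_div (h : IsMixingProfile ηp ηm e) (ξ : ℝ) :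
    deriv e ξ = flux e ξ / aGL (e ξ) := by
  rw [flux, mul_div_cancel_left₀ _ (h.aGL_pos ξ).ne']

lemma continuous_fluxExponent_integrand (h : IsMixingProfile ηp ηm e) :
    Continuous fun s => s / (2 * aGL (e s)) :=
  continuous_id.div
    (continuous_const.mul
      (continuousOn_aGL.comp_continuous h.differentiable.continuous h.sq_lt_one))
    fun s => by linarith [h.aGL_pos s]

lemma hasDerivAt_fluxExponent (h : IsMixingProfile ηp ηm e) (ξ : ℝ) :
    HasDerivAt (fluxExponent e) (ξ / (2 * aGL (e ξ))) ξ :=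
  h.continuous_fluxExponent_integrand.integral_hasStrictDerivAt 0 ξ |>.hasDerivAt

lemma flux_eq (h : IsMixingProfile ηp ηm e) (ξ : ℝ) :
    flux e ξ = flux e 0 * exp (-fluxExponent e ξ) := by
  have hconst : ∀ x, HasDerivAt (fun t => flux e t * exp (fluxExponent e t)) 0 x := fun x => by
    refine ((h.hasDerivAt_flux x).mul (h.hasDerivAt_fluxExponent x).exp).congr_deriv ?_
    unfold flux
    field_simp [(h.aGL_pos x).ne']
    ring
  have h0 := is_const_of_deriv_eq_zero (fun x => (hconst x).differentiableAt)
    (fun x => (hconst x).deriv) ξ 0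
  rw [show fluxExponent e 0 = 0 from intervalIntegral.integral_same, exp_zero, mul_one] at h0
  rw [exp_neg, ← h0, mul_inv_cancel_right₀ (exp_pos _).ne']

lemma sq_div_four_le_fluxExponent (h : IsMixingProfile ηp ηm e) (ξ : ℝ) :
    ξ ^ 2 / 4 ≤ fluxExponent e ξ := by
  have hc : ∀ s, 0 ≤ (1 / aGL (e s) - 1) / 2 := fun s => by
    linarith [one_le_one_div (h.aGL_pos s) (aGL_le_one (h.sq_lt_one s))]
  have hsq : ∫ s in (0:ℝ)..ξ, s / 2 = ξ ^ 2 / 4 := by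
    rw [intervalIntegral.integral_div, integral_id]
    ring
  have hsub : fluxExponent e ξ - ξ ^ 2 / 4 = ∫ s in (0:ℝ)..ξ, s * ((1 / aGL (e s) - 1) / 2) := by
    rw [fluxExponent, ← hsq, ← intervalIntegral.integral_sub
      (h.continuous_fluxExponent_integrand.intervalIntegrable _ _)
      ((by fun_prop : Continuous fun s : ℝ => s / 2).intervalIntegrable _ _)]
    congr 1 with s
    field_simp [(h.aGL_pos s).ne']
  linarith [integral_id_mul_nonneg hc ξ]

lemma abs_flux_le (h : IsMixingProfile ηp ηm e) (ξ : ℝ) :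
    |flux e ξ| ≤ |flux e 0| * exp (-(1 / 4) * ξ ^ 2) := by
  rw [h.flux_eq ξ, abs_mul, abs_exp]
  gcongr
  linarith [h.sq_div_four_le_fluxExponent ξ]

lemma tendsto_flux_cocompact (h : IsMixingProfile ηp ηm e) :
    Tendsto (flux e) (cocompact ℝ) (𝓝 0) := by
  have hg := (tendsto_rpow_abs_mul_exp_neg_mul_sq_cocompact
    (by norm_num : (0:ℝ) < 1 / 4) 0).const_mul |flux e 0|
  simp only [rpow_zero, one_mul, mul_zero] at hg
  exact squeeze_zero_norm h.abs_flux_le hg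

lemma flux_pos (h : IsMixingProfile ηp ηm e) (hv : 0 < flux e 0) (ξ : ℝ) : 0 < flux e ξ := by
  rw [h.flux_eq ξ]
  positivity

lemma deriv_pos (h : IsMixingProfile ηp ηm e) (hv : 0 < flux e 0) (ξ : ℝ) : 0 < deriv e ξ := by
  rw [h.deriv_eq_flux_div]
  exact div_pos (h.flux_pos hv ξ) (h.aGL_pos ξ)

lemma strictMono (h : IsMixingProfile ηp ηm e) (hv : 0 < flux e 0) : StrictMono e :=
  strictMono_of_deriv_pos (h.deriv_pos hv)

lemma mem_Ioo (h : IsMixingProfile ηp ηm e) (hv : 0 < flux e 0) (ξ : ℝ) : e ξ ∈ Ioo ηm ηp :=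
  have hmono := h.strictMono hv
  ⟨(hmono.monotone.le_of_tendsto h.2.2.2.2 (ξ - 1)).trans_lt (hmono (sub_one_lt ξ)),
    (hmono (lt_add_one ξ)).trans_le (hmono.monotone.ge_of_tendsto h.2.2.2.1 _)⟩

lemma lt_of_flux_pos (h : IsMixingProfile ηp ηm e) (hv : 0 < flux e 0) : ηm < ηp :=
  (h.mem_Ioo hv 0).1.trans (h.mem_Ioo hv 0).2

lemma mem_range (h : IsMixingProfile ηp ηm e) {y : ℝ} (hy : y ∈ Ioo ηm ηp) : y ∈ range e :=
  mem_range_of_exists_le_of_exists_ge h.differentiable.continuous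
    ((h.2.2.2.2.eventually (gt_mem_nhds hy.1)).exists.imp fun _ => le_of_lt)
    ((h.2.2.2.1.eventually (lt_mem_nhds hy.2)).exists.imp fun _ => le_of_lt)

lemma eq_const_of_flux_eq_zero (h : IsMixingProfile ηp ηm e) (hv : flux e 0 = 0) :
    e = fun _ => ηp := by
  have hconst : e = fun _ => e 0 := funext fun ξ =>
    is_const_of_deriv_eq_zero h.differentiable
      (fun x => by rw [h.deriv_eq_flux_div, h.flux_eq, hv, zero_mul, zero_div]) ξ 0
  have htop := h.2.2.2.1
  rw [hconst, tendsto_const_nhds_iff] at htop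
  rwa [← htop]

lemma neg (h : IsMixingProfile ηp ηm e) : IsMixingProfile (-ηp) (-ηm) (-e) := by
  obtain ⟨hcd, hrange, hode, htop, hbot⟩ := h
  refine ⟨hcd.neg, fun ξ => ?_, fun ξ => ?_, htop.neg, hbot.neg⟩
  · obtain ⟨h1, h2⟩ := hrange ξ
    exact ⟨by simpa using neg_lt_neg h2, by simpa using neg_lt_neg h1⟩
  · simp only [Pi.neg_apply, AGL_neg]
    simp only [deriv.fun_neg', deriv.neg', mul_neg]
    linarith [hode ξ]

lemma flux_pos_of_lt (h : IsMixingProfile ηp ηm e) (hlt : ηm < ηp) : 0 < flux e 0 := by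
  rcases lt_trichotomy (flux e 0) 0 with hv | hv | hv
  · have := h.neg.lt_of_flux_pos (by simpa [flux_neg] using hv)
    linarith
  · have hbot := h.2.2.2.2
    rw [h.eq_const_of_flux_eq_zero hv, tendsto_const_nhds_iff] at hbot
    linarith
  · exact hv

lemma eq_const_of_eq (h : IsMixingProfile ηp ηm e) (heq : ηm = ηp) : e = fun _ => ηp := by
  refine h.eq_const_of_flux_eq_zero ?_
  rcases lt_trichotomy (flux e 0) 0 with hv | hv | hv
  · linarith [h.neg.lt_of_flux_pos (by simpa [flux_neg] using hv)]
  · exact hv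
  · linarith [h.lt_of_flux_pos hv]

variable {e₁ e₂ : ℝ → ℝ}

lemma exists_comp_eq_of_flux_pos (h₁ : IsMixingProfile ηp ηm e₁) (h₂ : IsMixingProfile ηp ηm e₂)
    (hv₁ : 0 < flux e₁ 0) (hv₂ : 0 < flux e₂ 0) :
    ∃ φ : ℝ → ℝ, (∀ ξ, e₂ (φ ξ) = e₁ ξ) ∧ (∀ ξ, HasDerivAt φ (deriv e₁ ξ / deriv e₂ (φ ξ)) ξ) ∧
      Tendsto φ (cocompact ℝ) (cocompact ℝ) := by
  have hmono := h₂.strictMono hv₂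
  have hcomp : ∀ ξ, e₂ (invFun e₂ (e₁ ξ)) = e₁ ξ := fun ξ =>
    invFun_eq (h₂.mem_range (h₁.mem_Ioo hv₁ ξ))
  refine ⟨invFun e₂ ∘ e₁, hcomp, fun ξ => ?_, ?_⟩
  · have hinv := hasDerivAt_invFun hmono.injective
      (h₂.1.contDiffAt.hasStrictDerivAt two_ne_zero) (h₂.deriv_pos hv₂ (invFun e₂ (e₁ ξ))).ne'
    rw [hcomp ξ] at hinv
    exact (hinv.comp ξ (h₁.differentiable ξ).hasDerivAt).congr_deriv (div_eq_inv_mul _ _).symm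
  · rw [cocompact_eq_atBot_atTop]
    exact tendsto_sup.2
      ⟨(tendsto_atBot_of_monotone_comp hmono.monotone (fun x => (h₂.mem_Ioo hv₂ x).1)
          (h₁.2.2.2.2.congr fun ξ => (hcomp ξ).symm)).mono_right le_sup_left,
        (tendsto_atTop_of_monotone_comp hmono.monotone (fun x => (h₂.mem_Ioo hv₂ x).2)
          (h₁.2.2.2.1.congr fun ξ => (hcomp ξ).symm)).mono_right le_sup_right⟩

theorem eq_of_lt (h₁ : IsMixingProfile ηp ηm e₁) (h₂ : IsMixingProfile ηp ηm e₂)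
    (hlt : ηm < ηp) : e₁ = e₂ := by
  have hv₁ := h₁.flux_pos_of_lt hlt
  have hv₂ := h₂.flux_pos_of_lt hlt
  obtain ⟨φ, hcomp, hφ, hφlim⟩ := exists_comp_eq_of_flux_pos h₁ h₂ hv₁ hv₂
  have hd₂ : ∀ ξ, deriv e₂ (φ ξ) ≠ 0 := fun ξ => (h₂.deriv_pos hv₂ _).ne'
  have hG : ∀ ξ, HasDerivAt (fun t => flux e₁ t - flux e₂ (φ t))
      (deriv e₁ ξ / 2 * (φ ξ - ξ)) ξ := fun ξ =>
    ((h₁.hasDerivAt_flux ξ).sub ((h₂.hasDerivAt_flux (φ ξ)).comp ξ (hφ ξ))).congr_deriv (by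
      field_simp [hd₂ ξ]
      ring)
  have hψ : ∀ ξ, HasDerivAt (fun t => φ t - t)
      ((flux e₂ (φ ξ))⁻¹ * (flux e₁ ξ - flux e₂ (φ ξ))) ξ := fun ξ =>
    ((hφ ξ).sub (hasDerivAt_id ξ)).congr_deriv (by
      rw [flux, flux, hcomp ξ]
      field_simp [hd₂ ξ, (h₁.aGL_pos ξ).ne'])
  have hlim : Tendsto (fun t => flux e₁ t - flux e₂ (φ t)) (cocompact ℝ) (𝓝 0) := by
    simpa using h₁.tendsto_flux_cocompact.sub (h₂.tendsto_flux_cocompact.comp hφlim)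
  have hshift := (eq_zero_of_cooperative (fun ξ => half_pos (h₁.deriv_pos hv₁ ξ))
    (fun ξ => inv_pos.2 (h₂.flux_pos hv₂ _)) hG hψ hlim).2
  funext ξ
  rw [← hcomp ξ, sub_eq_zero.1 (congrFun hshift ξ)]

end IsMixingProfile

theorem uniqueness_mixing_profile_general
    (ηp ηm : ℝ)
    (e₁ e₂ : ℝ → ℝ)
    (h₁ : IsMixingProfile ηp ηm e₁)
    (h₂ : IsMixingProfile ηp ηm e₂) :
    e₁ = e₂ := by
  rcases lt_trichotomy ηm ηp with hlt | heq | hgt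
  · exact h₁.eq_of_lt h₂ hlt
  · rw [h₁.eq_const_of_eq heq, h₂.eq_const_of_eq heq]
  · exact neg_injective (h₁.neg.eq_of_lt h₂.neg (neg_lt_neg hgt))

/-- Uniqueness of the mixing profile. -/
theorem uniqueness_mixing_profile
    (ηp ηm : ℝ)
    (hp : ηp ∈ Set.Ioo (-(1 / Real.sqrt 3)) (1 / Real.sqrt 3))
    (hm : ηm ∈ Set.Ioo (-(1 / Real.sqrt 3)) (1 / Real.sqrt 3))
    (e₁ e₂ : ℝ → ℝ)
    (h₁ : IsMixingProfile ηp ηm e₁)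
    (h₂ : IsMixingProfile ηp ηm e₂) :
    e₁ = e₂ :=
  uniqueness_mixing_profile_general ηp ηm e₁ e₂ h₁ h₂
end
end

section
/- Sign of the asymptotic phase: if η̃ is a mixing profile for η₊, η₋ ∈ (−1/√3, 1/√3) and φ* = ∫_{−∞}^0 [η̃(ξ) − η₋] dξ, then φ* > 0 when η₊ > η₋ and φ* < 0 when η₊ < η₋; in particular φ* ≠ 0 whenever η₊ ≠ η₋. -/
/-!
The flux `v = (A ∘ η̃)' = a(η̃) η̃'` satisfies `v' = -(ξ/2) η̃' = -(ξ / (2 a(η̃))) v`, a linear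
equation, so `v` keeps the sign of `v 0`. As `η̃` has to travel from `η₋` to `η₊`, both `v` and
`η̃'` have the sign of `η₊ - η₋`, and so does `η̃ - η₋`. Integrability on `(-∞, 0]` comes from
`ξ η̃ + 2 v`, whose derivative is `η̃` by the equation: it gives
`∫_T^0 (η̃ - η̃ T) = 2 (v 0 - v T) ≤ 2 v 0`. Replacing `η̃` by `-η̃` (with the same
coefficient `a`) reduces the decreasing case to the increasing one.
-/

noncomputable section

open Real Filter MeasureTheory Set

theorem aGL_pos_s6 {η : ℝ} (h : η ∈ Ioo (-(1 / √3)) (1 / √3)) : 0 < aGL η := by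
  have h3 : (1 / √3) ^ 2 = 1 / 3 := by rw [div_pow, one_pow, sq_sqrt (by norm_num)]
  have hη : η ^ 2 < 1 / 3 := h3 ▸ sq_lt_sq' h.1 h.2
  exact div_pos (by linarith) (by linarith)

theorem Ioo_one_div_sqrt_three_subset : Ioo (-(1 / √3)) (1 / √3) ⊆ Ioo (-1 : ℝ) 1 := by
  have h : 1 / √3 < 1 := by
    rw [div_lt_one (by positivity), lt_sqrt zero_le_one]; norm_num
  exact Ioo_subset_Ioo (neg_le_neg h.le) h.le

theorem differentiableAt_aGL_s6 {η : ℝ} (h : η ∈ Ioo (-1 : ℝ) 1) : DifferentiableAt ℝ aGL η :=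
  ((differentiableAt_const _).sub ((differentiableAt_const _).mul (differentiableAt_pow 2))).div
    ((differentiableAt_const _).sub (differentiableAt_pow 2)) (by nlinarith [h.1, h.2])

theorem continuousOn_aGL_s6 : ContinuousOn aGL (Ioo (-1) 1) := fun _ hη =>
  (differentiableAt_aGL_s6 hη).continuousAt.continuousWithinAt

theorem hasDerivAt_AGL_s6 {η : ℝ} (h : η ∈ Ioo (-1 : ℝ) 1) : HasDerivAt AGL (aGL η) η := by
  have hη : Ioo (-1 : ℝ) 1 ∈ nhds η := Ioo_mem_nhds h.1 h.2
  have hsub : uIcc 0 η ⊆ Ioo (-1 : ℝ) 1 :=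
    ordConnected_Ioo.uIcc_subset ⟨by norm_num, by norm_num⟩ h
  exact intervalIntegral.integral_hasDerivAt_right
    (continuousOn_aGL_s6.mono hsub).intervalIntegrable
    (continuousOn_aGL_s6.stronglyMeasurableAtFilter isOpen_Ioo _ h)
    (continuousOn_aGL_s6.continuousAt hη)

theorem eq_mul_exp_integral_of_hasDerivAt {v c : ℝ → ℝ} (hc : Continuous c)
    (hv : ∀ x, HasDerivAt v (c x * v x) x) (x : ℝ) :
    v x = v 0 * exp (∫ t in (0 : ℝ)..x, c t) := by
  set C : ℝ → ℝ := fun x => ∫ t in (0 : ℝ)..x, c t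
  have hw : ∀ y, HasDerivAt (fun y => v y * exp (-C y)) 0 y := fun y =>
    ((hv y).mul ((hc.integral_hasStrictDerivAt 0 y).hasDerivAt.neg.exp)).congr_deriv (by ring)
  have hconst := is_const_of_deriv_eq_zero (fun y => (hw y).differentiableAt)
    (fun y => (hw y).deriv) x 0
  simp only [C, intervalIntegral.integral_same, neg_zero, exp_zero, mul_one] at hconst
  rw [← hconst, mul_assoc, ← exp_add, neg_add_cancel, exp_zero, mul_one]

theorem integrableOn_Iic_sub_of_monotone {f : ℝ → ℝ} {L M b : ℝ} (hf : Continuous f)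
    (hmono : Monotone f) (hL : Tendsto f atBot (nhds L))
    (hM : ∀ T ≤ b, ∫ x in T..b, (f x - f T) ≤ M) :
    IntegrableOn (fun x => f x - L) (Iic b) := by
  refine integrableOn_Iic_of_intervalIntegral_norm_bounded M b (a := id) (l := atBot)
    (fun _ => (hf.sub continuous_const).integrableOn_Ioc) tendsto_id ?_
  filter_upwards [eventually_le_atBot b] with S hS
  have hnorm : ∫ x in S..b, ‖f x - L‖ = ∫ x in S..b, (f x - L) :=
    intervalIntegral.integral_congr fun x _ =>
      Real.norm_of_nonneg (sub_nonneg.2 (hmono.le_of_tendsto hL x))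
  have hlim : Tendsto (fun T => ∫ x in S..b, (f x - f T)) atBot
      (nhds (∫ x in S..b, (f x - L))) := by
    have hint := hf.intervalIntegrable (μ := volume) S b
    simp only [intervalIntegral.integral_sub hint intervalIntegrable_const,
      intervalIntegral.integral_const, smul_eq_mul]
    exact tendsto_const_nhds.sub (tendsto_const_nhds.mul hL)
  rw [id, hnorm]
  refine le_of_tendsto hlim ?_
  filter_upwards [eventually_le_atBot S] with T hT
  have hint : ∀ c d, IntervalIntegrable (fun x => f x - f T) volume c d :=
    fun c d => (hf.sub continuous_const).intervalIntegrable c d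
  calc ∫ x in S..b, (f x - f T)
      ≤ (∫ x in T..S, (f x - f T)) + ∫ x in S..b, (f x - f T) :=
        le_add_of_nonneg_left (intervalIntegral.integral_nonneg hT fun x hx =>
          sub_nonneg.2 (hmono hx.1))
    _ = ∫ x in T..b, (f x - f T) :=
        intervalIntegral.integral_add_adjacent_intervals (hint _ _) (hint _ _)
    _ ≤ M := hM T (hT.trans hS)

/-- The mixing-profile equation written for the flux `v = (A ∘ e)'` and the coefficient
`a = aGL ∘ e`. -/
structure IsSelfSimilarFlux (e a v : ℝ → ℝ) : Prop where
  differentiable : Differentiable ℝ e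
  continuous_coeff : Continuous a
  coeff_pos : ∀ x, 0 < a x
  flux_eq : ∀ x, v x = a x * deriv e x
  hasDerivAt_flux : ∀ x, HasDerivAt v (-(x / 2) * deriv e x) x

namespace IsSelfSimilarFlux

variable {e a v : ℝ → ℝ} {L R : ℝ}

theorem neg (h : IsSelfSimilarFlux e a v) : IsSelfSimilarFlux (-e) a (-v) where
  differentiable := h.differentiable.neg
  continuous_coeff := h.continuous_coeff
  coeff_pos := h.coeff_pos
  flux_eq x := by simp [deriv.neg', h.flux_eq x]
  hasDerivAt_flux x := by simpa [deriv.neg'] using (h.hasDerivAt_flux x).neg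

theorem flux_eq_mul_exp (h : IsSelfSimilarFlux e a v) (x : ℝ) :
    v x = v 0 * exp (∫ t in (0 : ℝ)..x, -(t / (2 * a t))) := by
  have hc : Continuous fun t => -(t / (2 * a t)) :=
    (continuous_id.div (continuous_const.mul h.continuous_coeff)
      fun t => (mul_pos two_pos (h.coeff_pos t)).ne').neg
  refine eq_mul_exp_integral_of_hasDerivAt hc (fun y => ?_) x
  convert h.hasDerivAt_flux y using 1
  rw [h.flux_eq y]
  field_simp [(h.coeff_pos y).ne']

theorem flux_pos (h : IsSelfSimilarFlux e a v) (hR : Tendsto e atTop (nhds R))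
    (hL : Tendsto e atBot (nhds L)) (hLR : L < R) (x : ℝ) : 0 < v x := by
  suffices hv0 : 0 < v 0 from h.flux_eq_mul_exp x ▸ mul_pos hv0 (exp_pos _)
  by_contra! hv0
  have hanti : Antitone e := antitone_of_deriv_nonpos h.differentiable fun y => by
    have hy : a y * deriv e y ≤ 0 :=
      h.flux_eq y ▸ h.flux_eq_mul_exp y ▸ mul_nonpos_of_nonpos_of_nonneg hv0 (exp_pos _).le
    exact nonpos_of_mul_nonpos_right hy (h.coeff_pos y)
  linarith [hanti.le_of_tendsto hR 0, hanti.ge_of_tendsto hL 0]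

theorem strictMono (h : IsSelfSimilarFlux e a v) (hR : Tendsto e atTop (nhds R))
    (hL : Tendsto e atBot (nhds L)) (hLR : L < R) : StrictMono e :=
  strictMono_of_deriv_pos fun x =>
    pos_of_mul_pos_right (h.flux_eq x ▸ h.flux_pos hR hL hLR x) (h.coeff_pos x).le

theorem hasDerivAt_moment (h : IsSelfSimilarFlux e a v) (x : ℝ) :
    HasDerivAt (fun y => y * e y + 2 * v y) (e x) x := by
  refine (((hasDerivAt_id' x).mul (h.differentiable x).hasDerivAt).add
    ((h.hasDerivAt_flux x).const_mul 2)).congr_deriv ?_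
  ring

theorem integral_sub_eq (h : IsSelfSimilarFlux e a v) (T b : ℝ) :
    ∫ x in T..b, (e x - e T) = b * (e b - e T) + 2 * (v b - v T) := by
  rw [intervalIntegral.integral_sub (h.differentiable.continuous.intervalIntegrable _ _)
    intervalIntegrable_const, intervalIntegral.integral_eq_sub_of_hasDerivAt
    (fun x _ => h.hasDerivAt_moment x) (h.differentiable.continuous.intervalIntegrable _ _),
    intervalIntegral.integral_const, smul_eq_mul]
  ring

theorem setIntegral_Iic_sub_pos (h : IsSelfSimilarFlux e a v) (hR : Tendsto e atTop (nhds R))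
    (hL : Tendsto e atBot (nhds L)) (hLR : L < R) (b : ℝ) :
    0 < ∫ x in Iic b, (e x - L) := by
  have hmono := h.strictMono hR hL hLR
  have hpos : ∀ x, 0 < e x - L := fun x => sub_pos.2
    (lt_of_le_of_lt (hmono.monotone.le_of_tendsto hL (x - 1)) (hmono (sub_one_lt x)))
  have hint : IntegrableOn (fun x => e x - L) (Iic b) := by
    refine integrableOn_Iic_sub_of_monotone (M := |b| * (e b - L) + 2 * v b)
      h.differentiable.continuous hmono.monotone hL fun T hT => ?_
    rw [h.integral_sub_eq]
    have hLT := hmono.monotone.le_of_tendsto hL T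
    have hvT := h.flux_pos hR hL hLR T
    have hb : b * (e b - e T) ≤ |b| * (e b - L) :=
      (mul_le_mul_of_nonneg_right (le_abs_self b) (sub_nonneg.2 (hmono.monotone hT))).trans
        (mul_le_mul_of_nonneg_left (by linarith) (abs_nonneg b))
    linarith
  rw [setIntegral_pos_iff_support_of_nonneg_ae (.of_forall fun x => (hpos x).le) hint,
    inter_eq_right.2 fun x _ => Function.mem_support.2 (hpos x).ne', volume_Iic]
  exact ENNReal.zero_lt_top

theorem setIntegral_Iic_sub_neg (h : IsSelfSimilarFlux e a v) (hR : Tendsto e atTop (nhds R))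
    (hL : Tendsto e atBot (nhds L)) (hRL : R < L) (b : ℝ) :
    ∫ x in Iic b, (e x - L) < 0 := by
  have := h.neg.setIntegral_Iic_sub_pos hR.neg hL.neg (neg_lt_neg hRL) b
  simp only [Pi.neg_apply, neg_sub_neg, ← neg_sub (e _) L, integral_neg] at this
  linarith

end IsSelfSimilarFlux

theorem IsMixingProfile.isSelfSimilarFlux {ηp ηm : ℝ} {e : ℝ → ℝ} (he : IsMixingProfile ηp ηm e) :
    IsSelfSimilarFlux e (fun x => aGL (e x)) (deriv fun x => AGL (e x)) := by
  obtain ⟨hcd, hmem, hode, -, -⟩ := he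
  have hmem' : ∀ x, e x ∈ Ioo (-1 : ℝ) 1 := fun x => Ioo_one_div_sqrt_three_subset (hmem x)
  have hde : Differentiable ℝ e := hcd.differentiable (by norm_num)
  have hde' : Differentiable ℝ (deriv e) :=
    (hcd.deriv' (n := 1)).differentiable one_ne_zero
  have hflux : deriv (fun x => AGL (e x)) = fun x => aGL (e x) * deriv e x :=
    funext fun x => ((hasDerivAt_AGL_s6 (hmem' x)).comp x (hde x).hasDerivAt).deriv
  have hflux_diff : Differentiable ℝ (deriv fun x => AGL (e x)) :=
    hflux ▸ fun x => ((differentiableAt_aGL_s6 (hmem' x)).comp x (hde x)).mul (hde' x)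
  refine ⟨hde, continuous_iff_continuousAt.2 fun x =>
      (differentiableAt_aGL_s6 (hmem' x)).continuousAt.comp (hde x).continuousAt,
    fun x => aGL_pos_s6 (hmem x), fun x => congrFun hflux x, fun x => ?_⟩
  rw [neg_mul, ← eq_neg_of_add_eq_zero_left (hode x)]
  exact (hflux_diff x).hasDerivAt

theorem mixing_profile_phase_sign_general
    (ηp ηm : ℝ)
    (e : ℝ → ℝ) (he : IsMixingProfile ηp ηm e)
    (φstar : ℝ) (hφ : φstar = ∫ ξ in Set.Iic (0:ℝ), (e ξ - ηm)) :
    (ηm < ηp → 0 < φstar) ∧ (ηp < ηm → φstar < 0) ∧ (ηp ≠ ηm → φstar ≠ 0) := by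
  have hflux := he.isSelfSimilarFlux
  obtain ⟨-, -, -, hR, hL⟩ := he
  have hpos : ηm < ηp → 0 < φstar := fun h => hφ ▸ hflux.setIntegral_Iic_sub_pos hR hL h 0
  have hneg : ηp < ηm → φstar < 0 := fun h => hφ ▸ hflux.setIntegral_Iic_sub_neg hR hL h 0
  exact ⟨hpos, hneg, fun hne => hne.lt_or_gt.elim (fun h => (hneg h).ne) fun h => (hpos h).ne'⟩

/-- Sign of the asymptotic phase `φ* = ∫_{-∞}^0 (η̃(ξ) - η₋) dξ`. -/
theorem mixing_profile_phase_sign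
    (ηp ηm : ℝ)
    (hp : ηp ∈ Set.Ioo (-(1 / Real.sqrt 3)) (1 / Real.sqrt 3))
    (hm : ηm ∈ Set.Ioo (-(1 / Real.sqrt 3)) (1 / Real.sqrt 3))
    (e : ℝ → ℝ) (he : IsMixingProfile ηp ηm e)
    (φstar : ℝ) (hφ : φstar = ∫ ξ in Set.Iic (0:ℝ), (e ξ - ηm)) :
    (ηm < ηp → 0 < φstar) ∧ (ηp < ηm → φstar < 0) ∧ (ηp ≠ ηm → φstar ≠ 0) :=
  mixing_profile_phase_sign_general ηp ηm e he φstar hφ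
end
end

section
/- Eigenvalue −1 of the linearized phase diffusion operator: let η̃ be a smooth mixing profile for η₊, η₋ ∈ (−1/√3, 1/√3), and set ψ₀(ξ) = 2·a(η̃(ξ))·η̃′(ξ). Then ψ₀′(ξ) = −ξ·η̃′(ξ) for all ξ, and ψ₀ satisfies (d/dξ)[a(η̃(ξ))·ψ₀′(ξ)] + (ξ/2)·ψ₀′(ξ) − (1/2)·ψ₀(ξ) = −ψ₀(ξ) for all ξ ∈ ℝ. -/
noncomputable section

open Real Filter MeasureTheory Set

lemma aGL_contOn : ContinuousOn aGL (Set.Ioo (-1:ℝ) 1) := by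
  apply ContinuousOn.div (by fun_prop) (by fun_prop)
  intro x hx
  nlinarith [hx.1, hx.2]

lemma AGL_hasDerivAt {η : ℝ} (h : η ∈ Set.Ioo (-1:ℝ) 1) : HasDerivAt AGL (aGL η) η := by
  have hsub : Set.uIcc (0:ℝ) η ⊆ Set.Ioo (-1:ℝ) 1 :=
    Set.ordConnected_Ioo.uIcc_subset (by constructor <;> norm_num) h
  have hint : IntervalIntegrable aGL volume 0 η :=
    (aGL_contOn.mono hsub).intervalIntegrable
  have hmeas : StronglyMeasurableAtFilter aGL (nhds η) volume :=
    aGL_contOn.stronglyMeasurableAtFilter isOpen_Ioo η h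
  have hcont : ContinuousAt aGL η := aGL_contOn.continuousAt (isOpen_Ioo.mem_nhds h)
  exact intervalIntegral.integral_hasDerivAt_right hint hmeas hcont

lemma sq_lt_third {η : ℝ} (h : η ∈ Set.Ioo (-(1 / Real.sqrt 3)) (1 / Real.sqrt 3)) :
    η ^ 2 < 1 / 3 := by
  have h3 : Real.sqrt 3 ^ 2 = 3 := Real.sq_sqrt (by norm_num)
  obtain ⟨h1, h2⟩ := h
  have := sq_lt_sq' h1 h2
  rw [div_pow, h3, one_pow] at this
  linarith

lemma aGL_diffAt {η : ℝ} (h : η ^ 2 < 1 / 3) : DifferentiableAt ℝ aGL η := by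
  have hne : 1 - η ^ 2 ≠ 0 := by nlinarith
  exact DifferentiableAt.div (by fun_prop) (by fun_prop) hne

/-- Eigenvalue `-1` of the linearized phase diffusion operator:
`ψ₀ = 2 a(η̃) η̃'` satisfies `ψ₀' = -ξ η̃'` and
`[a(η̃)ψ₀']' + (ξ/2)ψ₀' - (1/2)ψ₀ = -ψ₀`. -/
theorem linearized_eigenvalue_neg_one
    (ηp ηm : ℝ)
    (hp : ηp ∈ Set.Ioo (-(1 / Real.sqrt 3)) (1 / Real.sqrt 3))
    (hm : ηm ∈ Set.Ioo (-(1 / Real.sqrt 3)) (1 / Real.sqrt 3))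
    (e : ℝ → ℝ) (he : IsMixingProfile ηp ηm e) (hsmooth : ContDiff ℝ (⊤ : ℕ∞) e)
    (ψ₀ : ℝ → ℝ) (hψ₀ : ψ₀ = fun ξ => 2 * aGL (e ξ) * deriv e ξ) :
    (∀ ξ : ℝ, deriv ψ₀ ξ = -ξ * deriv e ξ) ∧
    (∀ ξ : ℝ,
      deriv (fun x => aGL (e x) * deriv ψ₀ x) ξ + ξ / 2 * deriv ψ₀ ξ
        - (1/2) * ψ₀ ξ = -ψ₀ ξ) := by
  obtain ⟨-, hrange, hode, -, -⟩ := he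
  have hsq : ∀ x, (e x) ^ 2 < 1 / 3 := fun x => sq_lt_third (hrange x)
  have hmem : ∀ x, e x ∈ Set.Ioo (-1:ℝ) 1 := by
    intro x
    have := hsq x
    constructor <;> nlinarith
  have hde : Differentiable ℝ e := hsmooth.differentiable (by simp)
  have hde' : Differentiable ℝ (deriv e) := by
    have h2 : ContDiff ℝ ((1:ℕ) + 1) e := hsmooth.of_le (by rw [← WithTop.coe_natCast]; exact WithTop.coe_le_coe.mpr le_top)
    exact (contDiff_succ_iff_deriv.mp h2).2.2.differentiable (by simp)
  have haE : ∀ x, DifferentiableAt ℝ (fun y => aGL (e y)) x := fun x =>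
    (aGL_diffAt (hsq x)).comp x (hde x)
  -- the inner function g x = aGL (e x) * deriv e x
  set g : ℝ → ℝ := fun x => aGL (e x) * deriv e x with hg
  have hgdiff : ∀ x, DifferentiableAt ℝ g x := fun x => (haE x).mul (hde' x)
  have hAe : ∀ x, HasDerivAt (fun y => AGL (e y)) (g x) x := fun x =>
    (AGL_hasDerivAt (hmem x)).comp x (hde x).hasDerivAt
  have hd1 : deriv (fun y => AGL (e y)) = g := funext fun x => (hAe x).deriv
  have hψeq : ψ₀ = fun x => 2 * g x := by
    rw [hψ₀]; funext x; rw [hg]; ring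
  have hψdiff : ∀ x, DifferentiableAt ℝ ψ₀ x := by
    rw [hψeq]; exact fun x => (hgdiff x).const_mul 2
  have hpart1 : ∀ ξ : ℝ, deriv ψ₀ ξ = -ξ * deriv e ξ := by
    intro ξ
    have hode' := hode ξ
    rw [hd1] at hode'
    have : deriv ψ₀ ξ = 2 * deriv g ξ := by
      rw [hψeq, deriv_const_mul 2 (hgdiff ξ)]
    rw [this]
    linarith
  refine ⟨hpart1, fun ξ => ?_⟩
  have heq : (fun x => aGL (e x) * deriv ψ₀ x) = fun x => -(x / 2) * ψ₀ x := by
    funext x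
    rw [hpart1 x, hψ₀]
    ring
  have hc : HasDerivAt (fun x : ℝ => -(x / 2)) (-(1/2)) ξ := by
    exact (((hasDerivAt_id' ξ).div_const 2).neg).congr_deriv (by norm_num)
  have hprod : HasDerivAt (fun x => -(x / 2) * ψ₀ x)
      (-(1/2) * ψ₀ ξ + -(ξ / 2) * deriv ψ₀ ξ) ξ :=
    hc.mul (hψdiff ξ).hasDerivAt
  rw [heq, hprod.deriv]
  ring
end
end
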